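/- (Area decomposition.) Suppose s₁, s₂, s₃, s₄ : I → ℝ trace rectangles gracing γ. Then for every t ∈ I, A₁(t) + A₂(t) + A₃(t) + A₄(t) + X(t)·Y(t) = (1/2)∫_{s₁(t)}^{s₁(t)+1} det(γ(s), γ′(s)) ds; that is, the four signed areas between the sides of the rectangle and the corresponding arcs of γ, together with the area of the rectangle itself, add up to the total signed area enclosed by γ. -/

import Mathlib

/-!
Split the integral over a full period at `s₂, s₃, s₄`. What remains is the shoelace sum of the
four chords, which for a parallelogram equals minus twice its signed area `det(p₂ - p₁, p₄ - p₁)`;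
for a counterclockwise rectangle this signed area is `X * Y` by Lagrange's identity
`‖u‖²‖v‖² = ⟪u, v⟫² + det(u, v)²`.
-/

noncomputable section

/-- The planar cross product `det(u,v) = u₁v₂ − u₂v₁`. -/
def pdet (u v : EuclideanSpace ℝ (Fin 2)) : ℝ := u 0 * v 1 - u 1 * v 0

theorem Continuous.pdet {α : Type*} [TopologicalSpace α] {f g : α → EuclideanSpace ℝ (Fin 2)}
    (hf : Continuous f) (hg : Continuous g) : Continuous fun x => _root_.pdet (f x) (g x) := by
  unfold _root_.pdet
  fun_prop

theorem norm_sq_mul_norm_sq_eq_inner_sq_add_pdet_sq (u v : EuclideanSpace ℝ (Fin 2)) :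
    ‖u‖ ^ 2 * ‖v‖ ^ 2 = inner ℝ u v ^ 2 + pdet u v ^ 2 := by
  simp only [EuclideanSpace.norm_sq_eq, PiLp.inner_apply, Fin.sum_univ_two, Real.norm_eq_abs,
    sq_abs, RCLike.inner_apply, conj_trivial, pdet]
  ring

theorem norm_mul_norm_eq_pdet {u v : EuclideanSpace ℝ (Fin 2)} (h : inner ℝ u v = (0 : ℝ))
    (hpos : 0 < pdet u v) : ‖u‖ * ‖v‖ = pdet u v := by
  have hsq : (‖u‖ * ‖v‖) ^ 2 = pdet u v ^ 2 := by
    rw [mul_pow, norm_sq_mul_norm_sq_eq_inner_sq_add_pdet_sq, h]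
    ring
  exact (pow_left_inj₀ (by positivity) hpos.le two_ne_zero).1 hsq

theorem pdet_shoelace_of_add_eq_add {p₁ p₂ p₃ p₄ : EuclideanSpace ℝ (Fin 2)}
    (h : p₁ + p₃ = p₂ + p₄) :
    pdet p₂ p₁ + pdet p₃ p₂ + pdet p₄ p₃ + pdet p₁ p₄ + 2 * pdet (p₂ - p₁) (p₄ - p₁) = 0 := by
  obtain rfl : p₃ = p₂ + p₄ - p₁ := eq_sub_of_add_eq' h
  simp only [pdet, PiLp.add_apply, PiLp.sub_apply]
  ring

theorem intervalIntegral.integral_add_adjacent_intervals₄ {f : ℝ → ℝ} (hf : Continuous f)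
    (a b c d e : ℝ) :
    (∫ x in a..b, f x) + (∫ x in b..c, f x) + (∫ x in c..d, f x) + ∫ x in d..e, f x
      = ∫ x in a..e, f x := by
  simp only [intervalIntegral.integral_add_adjacent_intervals (hf.intervalIntegrable _ _)
    (hf.intervalIntegrable _ _)]

theorem stmt9_general
    (γ : ℝ → EuclideanSpace ℝ (Fin 2)) (hγ : ContDiff ℝ 1 γ)
    (hper : ∀ s : ℝ, γ (s + 1) = γ s)
    (s₁ s₂ s₃ s₄ : ℝ → ℝ)
    (I : Set ℝ)
    (hpar : ∀ t ∈ I, γ (s₁ t) + γ (s₃ t) = γ (s₂ t) + γ (s₄ t))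
    (hperp : ∀ t ∈ I, inner ℝ (γ (s₂ t) - γ (s₁ t)) (γ (s₄ t) - γ (s₁ t)) = (0 : ℝ))
    (hccw : ∀ t ∈ I, pdet (γ (s₂ t) - γ (s₁ t)) (γ (s₄ t) - γ (s₁ t)) > 0)
    (X Y : ℝ → ℝ)
    (hX : X = fun t => ‖γ (s₂ t) - γ (s₁ t)‖)
    (hY : Y = fun t => ‖γ (s₃ t) - γ (s₂ t)‖)
    (A₁ A₂ A₃ A₄ : ℝ → ℝ)
    (hA₁ : A₁ = fun t => (1/2) * (∫ s in (s₁ t)..(s₂ t), pdet (γ s) (deriv γ s))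
        + (1/2) * pdet (γ (s₂ t)) (γ (s₁ t)))
    (hA₂ : A₂ = fun t => (1/2) * (∫ s in (s₂ t)..(s₃ t), pdet (γ s) (deriv γ s))
        + (1/2) * pdet (γ (s₃ t)) (γ (s₂ t)))
    (hA₃ : A₃ = fun t => (1/2) * (∫ s in (s₃ t)..(s₄ t), pdet (γ s) (deriv γ s))
        + (1/2) * pdet (γ (s₄ t)) (γ (s₃ t)))
    (hA₄ : A₄ = fun t => (1/2) * (∫ s in (s₄ t)..(s₁ t + 1), pdet (γ s) (deriv γ s))
        + (1/2) * pdet (γ (s₁ t + 1)) (γ (s₄ t)))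
:
    ∀ t ∈ I, A₁ t + A₂ t + A₃ t + A₄ t + X t * Y t
      = (1/2) * ∫ s in (s₁ t)..(s₁ t + 1), pdet (γ s) (deriv γ s) := by
  subst hX hY hA₁ hA₂ hA₃ hA₄
  intro t ht
  have hopposite : γ (s₃ t) - γ (s₂ t) = γ (s₄ t) - γ (s₁ t) :=
    sub_eq_sub_iff_add_eq_add.2 (by rw [add_comm, hpar t ht, add_comm])
  have hXY : ‖γ (s₂ t) - γ (s₁ t)‖ * ‖γ (s₃ t) - γ (s₂ t)‖
      = pdet (γ (s₂ t) - γ (s₁ t)) (γ (s₄ t) - γ (s₁ t)) := by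
    rw [hopposite]
    exact norm_mul_norm_eq_pdet (hperp t ht) (hccw t ht)
  have hshoelace := pdet_shoelace_of_add_eq_add (hpar t ht)
  have hsplit := intervalIntegral.integral_add_adjacent_intervals₄
    (hγ.continuous.pdet (hγ.continuous_deriv le_rfl)) (s₁ t) (s₂ t) (s₃ t) (s₄ t) (s₁ t + 1)
  simp only [hper]
  rw [hXY, ← hsplit]
  linarith

/-- Area decomposition: the four signed areas between the sides of the
gracing rectangle and the corresponding arcs of `γ`, plus the area `X·Y` of
the rectangle, add up to the total signed area enclosed by `γ`. -/
theorem stmt9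
    (γ : ℝ → EuclideanSpace ℝ (Fin 2)) (hγ : ContDiff ℝ 1 γ)
    (hper : ∀ s : ℝ, γ (s + 1) = γ s)
    (s₁ s₂ s₃ s₄ : ℝ → ℝ)
    (I : Set ℝ) (hI : I.OrdConnected)
    (hpar : ∀ t ∈ I, γ (s₁ t) + γ (s₃ t) = γ (s₂ t) + γ (s₄ t))
    (hperp : ∀ t ∈ I, inner ℝ (γ (s₂ t) - γ (s₁ t)) (γ (s₄ t) - γ (s₁ t)) = (0 : ℝ))
    (hccw : ∀ t ∈ I, pdet (γ (s₂ t) - γ (s₁ t)) (γ (s₄ t) - γ (s₁ t)) > 0)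
    (X Y : ℝ → ℝ)
    (hX : X = fun t => ‖γ (s₂ t) - γ (s₁ t)‖)
    (hY : Y = fun t => ‖γ (s₃ t) - γ (s₂ t)‖)
    (A₁ A₂ A₃ A₄ : ℝ → ℝ)
    (hA₁ : A₁ = fun t => (1/2) * (∫ s in (s₁ t)..(s₂ t), pdet (γ s) (deriv γ s))
        + (1/2) * pdet (γ (s₂ t)) (γ (s₁ t)))
    (hA₂ : A₂ = fun t => (1/2) * (∫ s in (s₂ t)..(s₃ t), pdet (γ s) (deriv γ s))
        + (1/2) * pdet (γ (s₃ t)) (γ (s₂ t)))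
    (hA₃ : A₃ = fun t => (1/2) * (∫ s in (s₃ t)..(s₄ t), pdet (γ s) (deriv γ s))
        + (1/2) * pdet (γ (s₄ t)) (γ (s₃ t)))
    (hA₄ : A₄ = fun t => (1/2) * (∫ s in (s₄ t)..(s₁ t + 1), pdet (γ s) (deriv γ s))
        + (1/2) * pdet (γ (s₁ t + 1)) (γ (s₄ t)))
:
    ∀ t ∈ I, A₁ t + A₂ t + A₃ t + A₄ t + X t * Y t
      = (1/2) * ∫ s in (s₁ t)..(s₁ t + 1), pdet (γ s) (deriv γ s) :=
  stmt9_general γ hγ hper s₁ s₂ s₃ s₄ I hpar hperp hccw X Y hX hY A₁ A₂ A₃ A₄ hA₁ hA₂ hA₃ hA₄
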